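/- Let m ≥ 2 be an integer and let u : ℝ^m ∖ {0} → ℝ^{m²} be the Misawa–Nakauchi map with components u_{ij}(x) = (1/√(m(m−1)))(−δ_{ij} + m x_i x_j / r²). Then u is a harmonic map into the sphere, i.e. for every x ∈ ℝ^m ∖ {0} it satisfies Δu(x) + |∇u(x)|² u(x) = 0 (componentwise), where |∇u|² = Σ_{k,i,j} (∂_k u_{ij})². -/

import Mathlib

/-!
Write `π_y` for the orthogonal projection onto the line `ℝ y`, so that
`u_{ij} = c (-δ_{ij} + m ⟪e_i, π_x e_j⟫)` with `c = 1/√(m(m-1))`. The entries `⟪a, π_y b⟫` are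
explicit rational functions of `y`; differentiating them twice and summing over an orthonormal
basis with Parseval's identity gives `Δu = -(2m/|x|²) u` and
`|∇u|² = c² m² · 2(m-1)/|x|² = 2m/|x|²`, so the two terms of `Δu + |∇u|² u` cancel.
-/

noncomputable section

/-- Partial derivative of `f` in the `k`-th coordinate direction. -/
def pd {m : ℕ} (k : Fin m) (f : EuclideanSpace ℝ (Fin m) → ℝ)
    (x : EuclideanSpace ℝ (Fin m)) : ℝ :=
  fderiv ℝ f x (EuclideanSpace.single k 1)

/-- Euclidean Laplacian `Δf = Σ_k ∂²f/∂x_k²`. -/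
def lap {m : ℕ} (f : EuclideanSpace ℝ (Fin m) → ℝ)
    (x : EuclideanSpace ℝ (Fin m)) : ℝ :=
  ∑ k : Fin m, pd k (pd k f) x

/-- The Misawa–Nakauchi map `u_{ij}(x) = (1/√(m(m−1)))(−δ_{ij} + m xᵢxⱼ/r²)`. -/
def uMN (m : ℕ) (i j : Fin m) (x : EuclideanSpace ℝ (Fin m)) : ℝ :=
  (1 / Real.sqrt ((m : ℝ) * ((m : ℝ) - 1))) *
    (-(if i = j then (1 : ℝ) else 0) + (m : ℝ) * x i * x j / ‖x‖ ^ 2)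

open Topology RealInnerProductSpace Finset

variable {F : Type*} [NormedAddCommGroup F] [InnerProductSpace ℝ F]

-- `⟪a, π_y b⟫`, where `π_y` is the orthogonal projection onto `ℝ y`
def lineProjCoeff (a b y : F) : ℝ := ⟪a, y⟫ * ⟪b, y⟫ / ‖y‖ ^ 2

theorem hasFDerivAt_inner_right (a y : F) : HasFDerivAt (fun z => ⟪a, z⟫) (innerSL ℝ a) y :=
  (innerSL ℝ a).hasFDerivAt

theorem hasFDerivAt_inv_norm_sq {y : F} (hy : y ≠ 0) :
    HasFDerivAt (fun z : F => (‖z‖ ^ 2)⁻¹) ((-2 / ‖y‖ ^ 4) • innerSL ℝ y) y := by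
  refine ((hasDerivAt_inv (pow_ne_zero 2 (norm_ne_zero_iff.2 hy))).comp_hasFDerivAt y
    (hasStrictFDerivAt_norm_sq y).hasFDerivAt).congr_fderiv ?_
  ext h
  simp only [neg_smul, neg_apply, smul_apply, coe_innerSL_apply, nsmul_eq_mul, Nat.cast_ofNat,
    smul_eq_mul]
  ring

theorem fderiv_lineProjCoeff_apply (a b h : F) {y : F} (hy : y ≠ 0) :
    fderiv ℝ (lineProjCoeff a b) y h
      = (⟪a, h⟫ * ⟪b, y⟫ + ⟪a, y⟫ * ⟪b, h⟫) / ‖y‖ ^ 2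
        - 2 * ⟪h, y⟫ * ⟪a, y⟫ * ⟪b, y⟫ / ‖y‖ ^ 4 := by
  have hv : lineProjCoeff a b = fun z => ⟪a, z⟫ * ⟪b, z⟫ * (‖z‖ ^ 2)⁻¹ := by
    ext z; rw [lineProjCoeff, div_eq_mul_inv]
  rw [hv, (((hasFDerivAt_inner_right a y).fun_mul (hasFDerivAt_inner_right b y)).fun_mul
    (hasFDerivAt_inv_norm_sq hy)).fderiv]
  simp only [smul_add, add_apply, smul_apply, coe_innerSL_apply, smul_eq_mul, real_inner_comm y h]
  field_simp
  ring

theorem fderiv_fderiv_lineProjCoeff_apply (a b h : F) {x : F} (hx : x ≠ 0) :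
    fderiv ℝ (fun y => fderiv ℝ (lineProjCoeff a b) y h) x h
      = 2 * ⟪a, h⟫ * ⟪b, h⟫ / ‖x‖ ^ 2
        - 4 * ⟪h, x⟫ * (⟪a, h⟫ * ⟪b, x⟫ + ⟪a, x⟫ * ⟪b, h⟫) / ‖x‖ ^ 4
        - 2 * ‖h‖ ^ 2 * ⟪a, x⟫ * ⟪b, x⟫ / ‖x‖ ^ 4
        + 8 * ⟪h, x⟫ ^ 2 * ⟪a, x⟫ * ⟪b, x⟫ / ‖x‖ ^ 6 := by
  have hloc : (fun y => fderiv ℝ (lineProjCoeff a b) y h) =ᶠ[𝓝 x] fun y =>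
      (⟪a, h⟫ * ⟪b, y⟫ + ⟪a, y⟫ * ⟪b, h⟫) * (‖y‖ ^ 2)⁻¹
        - 2 * (⟪h, y⟫ * ⟪a, y⟫ * ⟪b, y⟫ * ((‖y‖ ^ 2)⁻¹ * (‖y‖ ^ 2)⁻¹)) := by
    filter_upwards [isOpen_ne.mem_nhds hx] with y hy
    rw [fderiv_lineProjCoeff_apply a b h hy]
    ring
  have hA := hasFDerivAt_inner_right a x
  have hB := hasFDerivAt_inner_right b x
  have hH := hasFDerivAt_inner_right h x
  have hR := hasFDerivAt_inv_norm_sq hx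
  rw [hloc.fderiv_eq, ((((hB.const_mul ⟪a, h⟫).fun_add (hA.mul_const ⟪b, h⟫)).fun_mul hR).fun_sub
    ((((hH.fun_mul hA).fun_mul hB).fun_mul (hR.fun_mul hR)).const_mul 2)).fderiv]
  simp only [smul_add, real_inner_comm x h, sub_apply, add_apply, smul_apply, coe_innerSL_apply,
    smul_eq_mul, inner_self_eq_norm_sq_to_K, Real.ringHom_apply]
  field_simp
  ring

theorem sum_sum_sq_symm_sub {ι : Type*} [Fintype ι] (p q : ι → ℝ) (A B : ℝ) :
    ∑ i, ∑ j, ((p i * q j + q i * p j) * A - B * q i * q j) ^ 2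
      = 2 * A ^ 2 * (∑ i, p i ^ 2) * (∑ i, q i ^ 2) + 2 * A ^ 2 * (∑ i, p i * q i) ^ 2
        - 4 * A * B * (∑ i, p i * q i) * (∑ i, q i ^ 2) + B ^ 2 * (∑ i, q i ^ 2) ^ 2 := by
  set P := ∑ i, p i ^ 2
  set Q := ∑ i, q i ^ 2
  set S := ∑ i, p i * q i
  -- symmetrised so that both sides agree termwise once expanded into double sums
  rw [show 2 * A ^ 2 * P * Q + 2 * A ^ 2 * S ^ 2 - 4 * A * B * S * Q + B ^ 2 * Q ^ 2
      = A ^ 2 * P * Q + A ^ 2 * Q * P + 2 * A ^ 2 * S * S - 2 * A * B * S * Q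
        - 2 * A * B * Q * S + B ^ 2 * Q * Q by ring]
  simp only [P, Q, S, sum_mul, mul_sum, ← sum_add_distrib, ← sum_sub_distrib]
  exact sum_congr rfl fun i _ => sum_congr rfl fun j _ => by ring

theorem OrthonormalBasis.sum_inner_mul_inner_left {ι : Type*} [Fintype ι]
    (b : OrthonormalBasis ι ℝ F) (u w : F) : ∑ i, ⟪b i, u⟫ * ⟪b i, w⟫ = ⟪u, w⟫ := by
  simpa only [real_inner_comm u] using b.sum_inner_mul_inner u w

section Basis

variable {ι : Type*} [Fintype ι] (b : OrthonormalBasis ι ℝ F) {x : F}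

theorem sum_fderiv_fderiv_lineProjCoeff (a c : F) (hx : x ≠ 0) :
    ∑ k, fderiv ℝ (fun y => fderiv ℝ (lineProjCoeff a c) y (b k)) x (b k)
      = 2 * ⟪a, c⟫ / ‖x‖ ^ 2 - 2 * Fintype.card ι * ⟪a, x⟫ * ⟪c, x⟫ / ‖x‖ ^ 4 := by
  have hterm : ∀ k, fderiv ℝ (fun y => fderiv ℝ (lineProjCoeff a c) y (b k)) x (b k)
      = 2 / ‖x‖ ^ 2 * (⟪b k, a⟫ * ⟪b k, c⟫)
        - 4 * ⟪c, x⟫ / ‖x‖ ^ 4 * (⟪b k, a⟫ * ⟪b k, x⟫)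
        - 4 * ⟪a, x⟫ / ‖x‖ ^ 4 * (⟪b k, c⟫ * ⟪b k, x⟫)
        - 2 * ⟪a, x⟫ * ⟪c, x⟫ / ‖x‖ ^ 4
        + 8 * ⟪a, x⟫ * ⟪c, x⟫ / ‖x‖ ^ 6 * ⟪b k, x⟫ ^ 2 := by
    intro k
    rw [fderiv_fderiv_lineProjCoeff_apply _ _ _ hx, b.orthonormal.1 k, real_inner_comm a,
      real_inner_comm c]
    ring
  simp only [hterm, sum_add_distrib, sum_sub_distrib, ← mul_sum, b.sum_inner_mul_inner_left,
    b.sum_sq_inner_right, sum_const, card_univ, nsmul_eq_mul]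
  field_simp
  ring

theorem sum_sum_sq_fderiv_lineProjCoeff (h : F) (hx : x ≠ 0) :
    ∑ i, ∑ j, (fderiv ℝ (lineProjCoeff (b i) (b j)) x h) ^ 2
      = 2 * ‖h‖ ^ 2 / ‖x‖ ^ 2 - 2 * ⟪h, x⟫ ^ 2 / ‖x‖ ^ 4 := by
  have hterm : ∀ i j, fderiv ℝ (lineProjCoeff (b i) (b j)) x h
      = (⟪b i, h⟫ * ⟪b j, x⟫ + ⟪b i, x⟫ * ⟪b j, h⟫) * (‖x‖ ^ 2)⁻¹
        - 2 * ⟪h, x⟫ / ‖x‖ ^ 4 * ⟪b i, x⟫ * ⟪b j, x⟫ := by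
    intro i j
    rw [fderiv_lineProjCoeff_apply _ _ _ hx]
    ring
  simp only [hterm, sum_sum_sq_symm_sub, b.sum_inner_mul_inner_left, b.sum_sq_inner_right]
  field_simp
  ring

theorem sum_sum_sum_sq_fderiv_lineProjCoeff (hx : x ≠ 0) :
    ∑ k, ∑ i, ∑ j, (fderiv ℝ (lineProjCoeff (b i) (b j)) x (b k)) ^ 2
      = 2 * (Fintype.card ι - 1) / ‖x‖ ^ 2 := by
  simp only [sum_sum_sq_fderiv_lineProjCoeff b _ hx, b.orthonormal.1, sum_sub_distrib,
    ← sum_div, ← mul_sum, b.sum_sq_inner_right, sum_const, card_univ, nsmul_eq_mul]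
  field_simp

end Basis

section Euclidean

variable {m : ℕ}

theorem pd_const_add (k : Fin m) (a : ℝ) (f : EuclideanSpace ℝ (Fin m) → ℝ) :
    pd k (fun y => a + f y) = pd k f := by
  ext y
  rw [pd, pd, fderiv_const_add]

theorem pd_const_mul (k : Fin m) (s : ℝ) (f : EuclideanSpace ℝ (Fin m) → ℝ) :
    pd k (fun y => s * f y) = fun y => s * pd k f y := by
  ext y
  rw [pd, pd, show (fun y => s * f y) = s • f from rfl, fderiv_const_smul_field]
  rfl

theorem lap_const_add_const_mul (a s : ℝ) (f : EuclideanSpace ℝ (Fin m) → ℝ)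
    (x : EuclideanSpace ℝ (Fin m)) : lap (fun y => a + s * f y) x = s * lap f x := by
  simp only [lap, pd_const_add, pd_const_mul, mul_sum]

theorem uMN_eq_lineProjCoeff (i j : Fin m) :
    uMN m i j = fun y => -(1 / Real.sqrt ((m : ℝ) * ((m : ℝ) - 1)) * if i = j then 1 else 0)
      + 1 / Real.sqrt ((m : ℝ) * ((m : ℝ) - 1)) * m
        * lineProjCoeff (EuclideanSpace.single i 1) (EuclideanSpace.single j 1) y := by
  ext y
  simp only [uMN, lineProjCoeff, EuclideanSpace.inner_single_left, map_one, one_mul]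
  ring

theorem lap_lineProjCoeff_single (i j : Fin m) {x : EuclideanSpace ℝ (Fin m)} (hx : x ≠ 0) :
    lap (lineProjCoeff (EuclideanSpace.single i 1) (EuclideanSpace.single j 1)) x
      = 2 * (if i = j then 1 else 0) / ‖x‖ ^ 2 - 2 * m * x i * x j / ‖x‖ ^ 4 := by
  have := sum_fderiv_fderiv_lineProjCoeff (EuclideanSpace.basisFun (Fin m) ℝ)
    (EuclideanSpace.single i 1) (EuclideanSpace.single j 1) hx
  simp only [EuclideanSpace.basisFun_apply, EuclideanSpace.inner_single_left, PiLp.single_apply,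
    map_one, one_mul, Fintype.card_fin] at this
  exact this

theorem sum_sq_pd_lineProjCoeff_single {x : EuclideanSpace ℝ (Fin m)} (hx : x ≠ 0) :
    ∑ k, ∑ a, ∑ b,
        (pd k (lineProjCoeff (EuclideanSpace.single a 1) (EuclideanSpace.single b 1)) x) ^ 2
      = 2 * (m - 1) / ‖x‖ ^ 2 := by
  simpa [pd] using sum_sum_sum_sq_fderiv_lineProjCoeff (EuclideanSpace.basisFun (Fin m) ℝ) hx

theorem lap_uMN (i j : Fin m) {x : EuclideanSpace ℝ (Fin m)} (hx : x ≠ 0) :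
    lap (uMN m i j) x = -(2 * m / ‖x‖ ^ 2) * uMN m i j x := by
  rw [uMN_eq_lineProjCoeff, lap_const_add_const_mul, lap_lineProjCoeff_single i j hx]
  simp only [lineProjCoeff, EuclideanSpace.inner_single_left, map_one, one_mul]
  ring

theorem sum_sq_pd_uMN (hm : 2 ≤ m) {x : EuclideanSpace ℝ (Fin m)} (hx : x ≠ 0) :
    ∑ k, ∑ a, ∑ b, (pd k (uMN m a b) x) ^ 2 = 2 * m / ‖x‖ ^ 2 := by
  have hm2 : (2 : ℝ) ≤ m := by exact_mod_cast hm
  have hm1 : (m : ℝ) - 1 ≠ 0 := by linarith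
  simp only [uMN_eq_lineProjCoeff, pd_const_add, pd_const_mul, mul_pow, ← mul_sum,
    sum_sq_pd_lineProjCoeff_single hx]
  rw [div_pow, one_pow, Real.sq_sqrt (by nlinarith)]
  field_simp

end Euclidean

theorem stmt3 (m : ℕ) (hm : 2 ≤ m) (x : EuclideanSpace ℝ (Fin m)) (hx : x ≠ 0)
    (i j : Fin m) :
    lap (uMN m i j) x
      + (∑ k : Fin m, ∑ a : Fin m, ∑ b : Fin m, (pd k (uMN m a b) x) ^ 2)
          * uMN m i j x = 0 := by
  rw [lap_uMN i j hx, sum_sq_pd_uMN hm hx]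
  ring
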